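/- For density matrices ρ, σ ∈ ℂ^{d×d} and matrices M, N ∈ ℂ^{d×d} with tr(ρM†M) > 0 and tr(σN†N) > 0, the root fidelity of conditioned states satisfies √F(ρ|M, σ|N) = ‖√ρ M†N √σ‖₁ / (√tr(ρM†M) · √tr(σN†N)). -/

import Mathlib

/-!
Write `ρ|M = X Xᴴ` with `X = M √ρ / √tr(ρMᴴM)`, and likewise `σ|N = Y Yᴴ`.
The trace norm `‖Z‖₁ = tr √(ZᴴZ)` depends only on `ZᴴZ`, and `‖Zᴴ‖₁ = ‖Z‖₁`
because `ZZᴴ` and `ZᴴZ` have the same characteristic polynomial.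
So if `P² = XXᴴ` and `Q² = YYᴴ` with `P`, `Q` Hermitian, then
`‖PQ‖₁ = ‖XᴴQ‖₁ = ‖QX‖₁ = ‖YᴴX‖₁ = ‖XᴴY‖₁`,
and `XᴴY` is `√ρ MᴴN √σ` up to the normalisation.
-/

open Matrix ComplexOrder

/-- The positive semidefinite square root (as defined in Mathlib of December 2024). -/
noncomputable def Matrix.PosSemidef.sqrt {n 𝕜 : Type*} [Fintype n] [RCLike 𝕜] [DecidableEq n]
    {A : Matrix n n 𝕜} (hA : A.PosSemidef) : Matrix n n 𝕜 :=
  hA.1.eigenvectorUnitary.1 * diagonal ((↑) ∘ (√·) ∘ hA.1.eigenvalues) *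
    (star hA.1.eigenvectorUnitary : Matrix n n 𝕜)

/-- The Schatten 1-norm (trace norm): ‖M‖₁ = tr √(MᴴM). -/
noncomputable def traceNorm {n m : Type*} [Fintype n] [Fintype m] [DecidableEq m]
    (M : Matrix n m ℂ) : ℝ :=
  ((Matrix.posSemidef_conjTranspose_mul_self M).sqrt.trace).re

namespace Matrix.PosSemidef

open scoped MatrixOrder

variable {n 𝕜 : Type*} [Fintype n] [DecidableEq n] [RCLike 𝕜] {A : Matrix n n 𝕜}

lemma sqrt_eq_cfcSqrt (hA : A.PosSemidef) : hA.sqrt = CFC.sqrt A := by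
  rw [CFC.sqrt_eq_real_sqrt A hA.nonneg, cfcₙ_eq_cfc, hA.1.cfc_eq, IsHermitian.cfc,
    Unitary.conjStarAlgAut_apply]
  rfl

lemma posSemidef_sqrt (hA : A.PosSemidef) : hA.sqrt.PosSemidef := by
  rw [sqrt_eq_cfcSqrt]; exact (CFC.sqrt_nonneg A).posSemidef

lemma sqrt_mul_self (hA : A.PosSemidef) : hA.sqrt * hA.sqrt = A := by
  rw [sqrt_eq_cfcSqrt]; exact CFC.sqrt_mul_sqrt_self A hA.nonneg

lemma sqrt_eq_of_mul_self_eq (hA : A.PosSemidef) {B : Matrix n n 𝕜} (hB : B.PosSemidef)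
    (h : B * B = A) : hA.sqrt = B := by
  rw [sqrt_eq_cfcSqrt]; exact CFC.sqrt_unique h hB.nonneg

lemma trace_sqrt (hA : A.PosSemidef) : hA.sqrt.trace = ∑ i, (√(hA.1.eigenvalues i) : 𝕜) := by
  rw [PosSemidef.sqrt, trace_mul_cycle, Unitary.coe_star_mul_self, one_mul, trace_diagonal]
  rfl

end Matrix.PosSemidef

section traceNorm

variable {n m : Type*} [Fintype n] [Fintype m] [DecidableEq m]

lemma traceNorm_congr {k : Type*} [Fintype k] {Z₁ : Matrix n m ℂ} {Z₂ : Matrix k m ℂ}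
    (h : Z₁ᴴ * Z₁ = Z₂ᴴ * Z₂) : traceNorm Z₁ = traceNorm Z₂ := by
  unfold traceNorm
  congr 3

lemma traceNorm_eq_sum_sqrt_eigenvalues (Z : Matrix n m ℂ) :
    traceNorm Z = ∑ i, √((isHermitian_conjTranspose_mul_self Z).eigenvalues i) := by
  rw [traceNorm, PosSemidef.trace_sqrt, Complex.re_sum]
  rfl

lemma traceNorm_conjTranspose [DecidableEq n] (Z : Matrix n n ℂ) :
    traceNorm Zᴴ = traceNorm Z := by
  have h : (isHermitian_conjTranspose_mul_self Zᴴ).eigenvalues =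
      (isHermitian_conjTranspose_mul_self Z).eigenvalues := by
    rw [IsHermitian.eigenvalues_eq_eigenvalues_iff, conjTranspose_conjTranspose, charpoly_mul_comm]
  rw [traceNorm_eq_sum_sqrt_eigenvalues, traceNorm_eq_sum_sqrt_eigenvalues, h]

lemma traceNorm_smul (c : ℂ) (Z : Matrix n m ℂ) : traceNorm (c • Z) = ‖c‖ * traceNorm Z := by
  have hZ := posSemidef_conjTranspose_mul_self Z
  have hsqrt : (posSemidef_conjTranspose_mul_self (c • Z)).sqrt = (‖c‖ : ℂ) • hZ.sqrt := by
    apply PosSemidef.sqrt_eq_of_mul_self_eq _ (hZ.posSemidef_sqrt.smul (by positivity))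
    rw [smul_mul_smul_comm, hZ.sqrt_mul_self, conjTranspose_smul, Matrix.smul_mul,
      Matrix.mul_smul, smul_smul, Complex.star_def, Complex.conj_mul', sq]
  rw [traceNorm, hsqrt, trace_smul, smul_eq_mul, Complex.re_ofReal_mul, traceNorm]

lemma traceNorm_mul_eq_of_mul_self_eq {k : Type*} [Fintype k] {P : Matrix n n ℂ}
    {X : Matrix n k ℂ} (hP : P.IsHermitian) (h : P * P = X * Xᴴ) (Z : Matrix n m ℂ) :
    traceNorm (P * Z) = traceNorm (Xᴴ * Z) := by
  apply traceNorm_congr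
  rw [conjTranspose_mul, conjTranspose_mul, hP.eq, conjTranspose_conjTranspose, Matrix.mul_assoc,
    ← Matrix.mul_assoc P, h, Matrix.mul_assoc, Matrix.mul_assoc]

variable [DecidableEq n]

lemma traceNorm_mul_eq_traceNorm_conjTranspose_mul {P Q X Y : Matrix n n ℂ}
    (hP : P.IsHermitian) (hQ : Q.IsHermitian) (hPX : P * P = X * Xᴴ) (hQY : Q * Q = Y * Yᴴ) :
    traceNorm (P * Q) = traceNorm (Xᴴ * Y) := by
  calc traceNorm (P * Q) = traceNorm (Xᴴ * Q) := traceNorm_mul_eq_of_mul_self_eq hP hPX Q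
    _ = traceNorm (Q * X) := by
      rw [← traceNorm_conjTranspose, conjTranspose_mul, conjTranspose_conjTranspose, hQ.eq]
    _ = traceNorm (Yᴴ * X) := traceNorm_mul_eq_of_mul_self_eq hQ hQY X
    _ = traceNorm (Xᴴ * Y) := by
      rw [← traceNorm_conjTranspose, conjTranspose_mul, conjTranspose_conjTranspose]

end traceNorm

namespace Matrix.PosSemidef

variable {n m : Type*} [Fintype n] [Fintype m] {ρ : Matrix n n ℂ}

lemma trace_mul_conjTranspose_mul_self_nonneg (hρ : ρ.PosSemidef) (K : Matrix m n ℂ) :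
    0 ≤ (ρ * (Kᴴ * K)).trace := by
  rw [← Matrix.mul_assoc, trace_mul_cycle]
  exact (hρ.mul_mul_conjTranspose_same K).trace_nonneg

lemma trace_mul_conjTranspose_mul_self_eq_re (hρ : ρ.PosSemidef) (K : Matrix m n ℂ) :
    (ρ * (Kᴴ * K)).trace = ((ρ * (Kᴴ * K)).trace.re : ℂ) :=
  Complex.eq_re_of_ofReal_le (r := 0) <| by
    simpa using hρ.trace_mul_conjTranspose_mul_self_nonneg K

variable [DecidableEq n]

/-- `X` with `X * Xᴴ = ρ|K`, the state `ρ` conditioned on `K`. -/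
noncomputable def condFactor (hρ : ρ.PosSemidef) (K : Matrix m n ℂ) : Matrix m n ℂ :=
  (((√(ρ * (Kᴴ * K)).trace.re)⁻¹ : ℝ) : ℂ) • (K * hρ.sqrt)

lemma condFactor_mul_conjTranspose (hρ : ρ.PosSemidef) (K : Matrix m n ℂ) :
    hρ.condFactor K * (hρ.condFactor K)ᴴ = ((ρ * (Kᴴ * K)).trace)⁻¹ • (K * ρ * Kᴴ) := by
  have hr : 0 ≤ (ρ * (Kᴴ * K)).trace.re := by
    simpa using Complex.re_le_re (hρ.trace_mul_conjTranspose_mul_self_nonneg K)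
  have hmat : K * hρ.sqrt * (K * hρ.sqrt)ᴴ = K * ρ * Kᴴ := by
    rw [conjTranspose_mul, hρ.posSemidef_sqrt.1.eq, Matrix.mul_assoc, ← Matrix.mul_assoc hρ.sqrt,
      hρ.sqrt_mul_self, ← Matrix.mul_assoc]
  rw [condFactor, conjTranspose_smul, Matrix.smul_mul, Matrix.mul_smul, smul_smul, hmat,
    Complex.star_def, Complex.conj_ofReal, ← Complex.ofReal_mul, ← mul_inv, Real.mul_self_sqrt hr,
    Complex.ofReal_inv, ← hρ.trace_mul_conjTranspose_mul_self_eq_re]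

lemma conjTranspose_condFactor_mul_condFactor {σ : Matrix n n ℂ} (hρ : ρ.PosSemidef)
    (hσ : σ.PosSemidef) (K L : Matrix m n ℂ) :
    (hρ.condFactor K)ᴴ * hσ.condFactor L =
      (((√(ρ * (Kᴴ * K)).trace.re)⁻¹ * (√(σ * (Lᴴ * L)).trace.re)⁻¹ : ℝ) : ℂ) •
        (hρ.sqrt * (Kᴴ * L) * hσ.sqrt) := by
  rw [condFactor, condFactor, conjTranspose_smul, conjTranspose_mul, hρ.posSemidef_sqrt.1.eq,
    Matrix.smul_mul, Matrix.mul_smul, smul_smul, Complex.star_def, Complex.conj_ofReal,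
    ← Complex.ofReal_mul, Matrix.mul_assoc, Matrix.mul_assoc, Matrix.mul_assoc]

end Matrix.PosSemidef

theorem rootFidelity_cond_cond_general {d : ℕ} (ρ σ M N : Matrix (Fin d) (Fin d) ℂ)
    (hρ : ρ.PosSemidef)
    (hσ : σ.PosSemidef)
    (hρM : (((ρ * (Mᴴ * M)).trace)⁻¹ • (M * ρ * Mᴴ)).PosSemidef)
    (hσN : (((σ * (Nᴴ * N)).trace)⁻¹ • (N * σ * Nᴴ)).PosSemidef) :
    traceNorm (hρM.sqrt * hσN.sqrt) =
      traceNorm (hρ.sqrt * (Mᴴ * N) * hσ.sqrt) /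
        (Real.sqrt (((ρ * (Mᴴ * M)).trace).re) * Real.sqrt (((σ * (Nᴴ * N)).trace).re)) := by
  have hX : hρM.sqrt * hρM.sqrt = hρ.condFactor M * (hρ.condFactor M)ᴴ := by
    rw [hρM.sqrt_mul_self, hρ.condFactor_mul_conjTranspose]
  have hY : hσN.sqrt * hσN.sqrt = hσ.condFactor N * (hσ.condFactor N)ᴴ := by
    rw [hσN.sqrt_mul_self, hσ.condFactor_mul_conjTranspose]
  rw [traceNorm_mul_eq_traceNorm_conjTranspose_mul hρM.posSemidef_sqrt.1 hσN.posSemidef_sqrt.1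
    hX hY, PosSemidef.conjTranspose_condFactor_mul_condFactor, traceNorm_smul,
    Complex.norm_real, Real.norm_of_nonneg (by positivity), ← mul_inv, inv_mul_eq_div]

/-- Root fidelity of conditioned states:
√F(ρ|M, σ|N) = ‖√ρ MᴴN √σ‖₁ / (√tr(ρMᴴM)·√tr(σNᴴN)). -/
theorem rootFidelity_cond_cond {d : ℕ} (ρ σ M N : Matrix (Fin d) (Fin d) ℂ)
    (hρ : ρ.PosSemidef) (hρ1 : ρ.trace = 1)
    (hσ : σ.PosSemidef) (hσ1 : σ.trace = 1)
    (hM : 0 < ((ρ * (Mᴴ * M)).trace).re)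
    (hN : 0 < ((σ * (Nᴴ * N)).trace).re)
    (hρM : (((ρ * (Mᴴ * M)).trace)⁻¹ • (M * ρ * Mᴴ)).PosSemidef)
    (hσN : (((σ * (Nᴴ * N)).trace)⁻¹ • (N * σ * Nᴴ)).PosSemidef) :
    traceNorm (hρM.sqrt * hσN.sqrt) =
      traceNorm (hρ.sqrt * (Mᴴ * N) * hσ.sqrt) /
        (Real.sqrt (((ρ * (Mᴴ * M)).trace).re) * Real.sqrt (((σ * (Nᴴ * N)).trace).re)) :=
  rootFidelity_cond_cond_general ρ σ M N hρ hσ hρM hσN
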